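/- Let s > 1, C_u, C_v > 0, n a positive integer, and suppose |u_i| ≤ C_u/i^s and |v_i| ≤ C_v/i^s for all i > n. Define (uv)_k = (1/2)∑_{i=1}^∞ u_{i+k} v_i + (1/2)∑_{i=1}^∞ u_i v_{i+k} − (1/2)∑_{i=1}^{k-1} u_i v_{k-i}. Then for every k > 2n, |(uv)_k| ≤ D/k^s with D = (1/2)[ ∑_{i=1}^n (C_u |v_i| + C_v |u_i|)(1 + ((2n+1)/(2n+1−i))^s) + C_u C_v (2 + 2^s) n^{1−s}/(s−1) ]. -/

import Mathlib

/-!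
The two infinite sums are handled alike: in `∑ u_{i+k} v_i` the factor `u_{i+k}` has index
above `k`, hence is at most `C_u / k^s`, while `∑ |v_i|` is at most
`∑_{i ≤ n} |v_i| + C_v n^{1-s}/(s-1)` by comparing the tail with `∫_n^∞ x^{-s} dx`.
In the finite convolution `∑ u_i v_{k-i}`, the terms with `i ≤ n` or `k - i ≤ n` use
`k - i ≥ k (2n+1-i)/(2n+1)` (valid since `k ≥ 2n+1`), and the middle terms use
`i^{-s} (k-i)^{-s} ≤ 2^{s-1} k^{-s} (i^{-s} + (k-i)^{-s})`, which is convexity of `x ↦ x^s`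
at `1/i` and `1/(k-i)`; the two resulting tails are again `p`-series tails.
-/

open Finset

lemma sum_Ico_inv_rpow_le {s : ℝ} (hs : 1 < s) {n : ℕ} (hn : 0 < n) (M : ℕ) :
    ∑ i ∈ Ico (n + 1) M, ((i : ℝ) ^ s)⁻¹ ≤ (n : ℝ) ^ (1 - s) / (s - 1) := by
  set N := M - (n + 1)
  have hn' : (0 : ℝ) < n := by exact_mod_cast hn
  have hpos : (0 : ℝ) ∉ Set.uIcc (n : ℝ) (n + N) := by
    rw [Set.uIcc_of_le (by simp)]; exact fun h => hn'.not_ge h.1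
  have hanti : AntitoneOn (fun x : ℝ => x ^ (-s)) (Set.Icc n (n + N)) :=
    (Real.antitoneOn_rpow_Ioi_of_exponent_nonpos (by linarith)).mono
      fun x hx => hn'.trans_le hx.1
  calc ∑ i ∈ Ico (n + 1) M, ((i : ℝ) ^ s)⁻¹
      = ∑ i ∈ range N, ((n : ℝ) + ((i + 1 : ℕ) : ℝ)) ^ (-s) := by
        rw [sum_Ico_eq_sum_range]
        refine sum_congr rfl fun i _ => ?_
        rw [Real.rpow_neg (by positivity)]
        push_cast; ring_nf
    _ ≤ ∫ x in (n : ℝ)..n + N, x ^ (-s) := hanti.sum_le_integral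
    _ = ((n + N : ℝ) ^ (1 - s) - (n : ℝ) ^ (1 - s)) / (1 - s) := by
        rw [integral_rpow (Or.inr ⟨by linarith, hpos⟩)]; ring_nf
    _ ≤ (n : ℝ) ^ (1 - s) / (s - 1) := by
        rw [← neg_div_neg_eq, neg_sub, neg_sub]
        gcongr
        linarith [Real.rpow_nonneg (by positivity : (0 : ℝ) ≤ n + N) (1 - s)]

lemma nonneg_of_forall_abs_le_div_rpow {s C : ℝ} {n : ℕ} {v : ℕ → ℝ}
    (hv : ∀ i : ℕ, n < i → |v i| ≤ C / (i : ℝ) ^ s) : 0 ≤ C := by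
  have hpos : (0 : ℝ) < ((n + 1 : ℕ) : ℝ) ^ s := by positivity
  simpa using (le_div_iff₀ hpos).1 ((abs_nonneg _).trans (hv (n + 1) n.lt_succ_self))

section Decay

variable {s C : ℝ} {n : ℕ} {v : ℕ → ℝ}

lemma sum_Ico_abs_le (hs : 1 < s) (hn : 0 < n)
    (hv : ∀ i : ℕ, n < i → |v i| ≤ C / (i : ℝ) ^ s) (M : ℕ) :
    ∑ i ∈ Ico (n + 1) M, |v i| ≤ C * ((n : ℝ) ^ (1 - s) / (s - 1)) :=
  calc ∑ i ∈ Ico (n + 1) M, |v i| ≤ ∑ i ∈ Ico (n + 1) M, C * ((i : ℝ) ^ s)⁻¹ :=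
        sum_le_sum fun i hi => (hv i (mem_Ico.1 hi).1).trans_eq (div_eq_mul_inv _ _)
    _ ≤ C * ((n : ℝ) ^ (1 - s) / (s - 1)) := by
        rw [← mul_sum]
        exact mul_le_mul_of_nonneg_left (sum_Ico_inv_rpow_le hs hn M)
          (nonneg_of_forall_abs_le_div_rpow hv)

lemma sum_range_abs_succ_le (hs : 1 < s) (hn : 0 < n)
    (hv : ∀ i : ℕ, n < i → |v i| ≤ C / (i : ℝ) ^ s) (N : ℕ) :
    ∑ i ∈ range N, |v (i + 1)| ≤ ∑ i ∈ Icc 1 n, |v i| + C * ((n : ℝ) ^ (1 - s) / (s - 1)) :=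
  calc ∑ i ∈ range N, |v (i + 1)| = ∑ i ∈ Ico 1 (N + 1), |v i| := by
        rw [range_eq_Ico, sum_Ico_add' (fun i => |v i|)]
    _ ≤ ∑ i ∈ Ico 1 (n + 1 + N), |v i| :=
        sum_le_sum_of_subset_of_nonneg (Ico_subset_Ico_right (by omega))
          fun _ _ _ => abs_nonneg _
    _ = ∑ i ∈ Icc 1 n, |v i| + ∑ i ∈ Ico (n + 1) (n + 1 + N), |v i| := by
        rw [← Ico_add_one_right_eq_Icc, sum_Ico_consecutive _ (by omega) (by omega)]
    _ ≤ _ := add_le_add_right (sum_Ico_abs_le hs hn hv _) _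

lemma summable_abs_succ (hs : 1 < s) (hn : 0 < n)
    (hv : ∀ i : ℕ, n < i → |v i| ≤ C / (i : ℝ) ^ s) : Summable fun i => |v (i + 1)| :=
  summable_of_sum_range_le (fun _ => abs_nonneg _) (sum_range_abs_succ_le hs hn hv)

lemma tsum_abs_succ_le (hs : 1 < s) (hn : 0 < n)
    (hv : ∀ i : ℕ, n < i → |v i| ≤ C / (i : ℝ) ^ s) :
    ∑' i, |v (i + 1)| ≤ ∑ i ∈ Icc 1 n, |v i| + C * ((n : ℝ) ^ (1 - s) / (s - 1)) :=
  Real.tsum_le_of_sum_range_le (fun _ => abs_nonneg _) (sum_range_abs_succ_le hs hn hv)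

end Decay

lemma abs_tsum_mul_le {ι : Type*} {a b : ι → ℝ} {M : ℝ} (ha : ∀ i, |a i| ≤ M)
    (hb : Summable fun i => |b i|) : |∑' i, a i * b i| ≤ M * ∑' i, |b i| := by
  have hab : ∀ i, |a i * b i| ≤ M * |b i| := fun i => by
    rw [abs_mul]; exact mul_le_mul_of_nonneg_right (ha i) (abs_nonneg _)
  have hsum : Summable fun i => |a i * b i| :=
    (hb.mul_left M).of_nonneg_of_le (fun _ => abs_nonneg _) hab
  calc |∑' i, a i * b i| ≤ ∑' i, |a i * b i| := by
        simpa only [Real.norm_eq_abs] using norm_tsum_le_tsum_norm (f := fun i => a i * b i) hsum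
    _ ≤ ∑' i, M * |b i| := hsum.tsum_le_tsum hab (hb.mul_left M)
    _ = M * ∑' i, |b i| := tsum_mul_left

lemma abs_tsum_shift_mul_le {s Cu Cv : ℝ} (hs : 1 < s) {n : ℕ} (hn : 0 < n) {u v : ℕ → ℝ}
    (hu : ∀ i : ℕ, n < i → |u i| ≤ Cu / (i : ℝ) ^ s)
    (hv : ∀ i : ℕ, n < i → |v i| ≤ Cv / (i : ℝ) ^ s) {k : ℕ} (hk : n < k) :
    |∑' i : ℕ, u (i + 1 + k) * v (i + 1)| ≤
      (Cu * ∑ i ∈ Icc 1 n, |v i| + Cu * Cv * ((n : ℝ) ^ (1 - s) / (s - 1))) / (k : ℝ) ^ s := by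
  have hCu := nonneg_of_forall_abs_le_div_rpow hu
  have hu_k (i : ℕ) : |u (i + 1 + k)| ≤ Cu / (k : ℝ) ^ s := by
    have hk0 : (0 : ℝ) < k := Nat.cast_pos.2 (by omega)
    have hki : (k : ℝ) ≤ ((i + 1 + k : ℕ) : ℝ) := Nat.cast_le.2 (by omega)
    exact (hu _ (by omega)).trans <|
      div_le_div_of_nonneg_left hCu (by positivity) (by gcongr)
  calc _ ≤ Cu / (k : ℝ) ^ s * ∑' i, |v (i + 1)| :=
        abs_tsum_mul_le hu_k (summable_abs_succ hs hn hv)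
    _ ≤ Cu / (k : ℝ) ^ s * (∑ i ∈ Icc 1 n, |v i| + Cv * ((n : ℝ) ^ (1 - s) / (s - 1))) := by
        gcongr; exact tsum_abs_succ_le hs hn hv
    _ = _ := by ring

lemma inv_rpow_sub_le {s j m k : ℝ} (hs : 0 ≤ s) (hj : 0 ≤ j) (hjm : j < m) (hmk : m ≤ k) :
    ((k - j) ^ s)⁻¹ ≤ (m / (m - j)) ^ s / k ^ s := by
  have hkj : 0 < k - j := by linarith
  have hmj : 0 < m - j := by linarith
  rw [← Real.inv_rpow hkj.le, ← Real.div_rpow (div_nonneg (by linarith) hmj.le) (by linarith)]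
  refine Real.rpow_le_rpow (inv_pos.2 hkj).le ?_ hs
  rw [div_div, inv_eq_one_div, div_le_div_iff₀ hkj (by nlinarith)]
  nlinarith

lemma sum_Icc_abs_mul_sub_le {s C : ℝ} (hs : 0 ≤ s) {n : ℕ} {u v : ℕ → ℝ}
    (hv : ∀ i : ℕ, n < i → |v i| ≤ C / (i : ℝ) ^ s) {k : ℕ} (hk : 2 * n < k) :
    ∑ i ∈ Icc 1 n, |u i * v (k - i)| ≤
      (∑ i ∈ Icc 1 n, C * |u i| * ((2 * (n : ℝ) + 1) / (2 * (n : ℝ) + 1 - (i : ℝ))) ^ s) /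
        (k : ℝ) ^ s := by
  have hC := nonneg_of_forall_abs_le_div_rpow hv
  rw [sum_div]
  refine sum_le_sum fun i hi => ?_
  obtain ⟨-, hin⟩ := mem_Icc.1 hi
  have hin' : (i : ℝ) ≤ n := by exact_mod_cast hin
  have hk' : 2 * (n : ℝ) + 1 ≤ k := by exact_mod_cast hk
  calc |u i * v (k - i)| ≤ |u i| * (C * (((k : ℝ) - i) ^ s)⁻¹) := by
        rw [abs_mul, ← div_eq_mul_inv, ← Nat.cast_sub (by omega)]
        exact mul_le_mul_of_nonneg_left (hv _ (by omega)) (abs_nonneg _)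
    _ ≤ |u i| * (C * (((2 * (n : ℝ) + 1) / (2 * (n : ℝ) + 1 - (i : ℝ))) ^ s / (k : ℝ) ^ s)) := by
        gcongr
        exact inv_rpow_sub_le hs (by positivity) (by linarith) hk'
    _ = _ := by ring

lemma inv_rpow_mul_inv_rpow_le {s a b : ℝ} (hs : 1 ≤ s) (ha : 0 < a) (hb : 0 < b) :
    (a ^ s)⁻¹ * (b ^ s)⁻¹ ≤ 2 ^ (s - 1) / (a + b) ^ s * ((a ^ s)⁻¹ + (b ^ s)⁻¹) := by
  have hconv : (a⁻¹ + b⁻¹) ^ s ≤ 2 ^ (s - 1) * (a⁻¹ ^ s + b⁻¹ ^ s) := by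
    have := NNReal.rpow_add_le_mul_rpow_add_rpow ⟨a⁻¹, by positivity⟩ ⟨b⁻¹, by positivity⟩ hs
    exact_mod_cast this
  rw [Real.inv_rpow ha.le, Real.inv_rpow hb.le,
    show a⁻¹ + b⁻¹ = (a + b) * (a⁻¹ * b⁻¹) by field_simp; ring,
    Real.mul_rpow (by positivity) (by positivity), Real.mul_rpow (by positivity) (by positivity),
    Real.inv_rpow ha.le, Real.inv_rpow hb.le] at hconv
  rw [div_mul_eq_mul_div, le_div_iff₀ (by positivity)]
  linarith

lemma sum_Ico_inv_rpow_reflect (s : ℝ) {n k : ℕ} (hk : 2 * n < k) :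
    ∑ i ∈ Ico (n + 1) (k - n), (((k - i : ℕ) : ℝ) ^ s)⁻¹ =
      ∑ i ∈ Ico (n + 1) (k - n), ((i : ℝ) ^ s)⁻¹ := by
  rw [sum_Ico_reflect (fun j => ((j : ℝ) ^ s)⁻¹) _ (by omega)]
  congr 2 <;> omega

section Convolution

variable {s Cu Cv : ℝ} {n k : ℕ} {u v : ℕ → ℝ}

lemma sum_Ico_abs_mul_sub_le (hs : 1 < s) (hn : 0 < n)
    (hu : ∀ i : ℕ, n < i → |u i| ≤ Cu / (i : ℝ) ^ s)
    (hv : ∀ i : ℕ, n < i → |v i| ≤ Cv / (i : ℝ) ^ s) (hk : 2 * n < k) :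
    ∑ i ∈ Ico (n + 1) (k - n), |u i * v (k - i)| ≤
      Cu * Cv * 2 ^ s * ((n : ℝ) ^ (1 - s) / (s - 1)) / (k : ℝ) ^ s := by
  have hCu := nonneg_of_forall_abs_le_div_rpow hu
  have hCv := nonneg_of_forall_abs_le_div_rpow hv
  have hterm (i : ℕ) (hi : i ∈ Ico (n + 1) (k - n)) : |u i * v (k - i)| ≤
      Cu * Cv * (2 ^ (s - 1) / (k : ℝ) ^ s) *
        (((i : ℝ) ^ s)⁻¹ + (((k - i : ℕ) : ℝ) ^ s)⁻¹) := by
    obtain ⟨hi1, hi2⟩ := mem_Ico.1 hi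
    have hsum : (i : ℝ) + ((k - i : ℕ) : ℝ) = k := by
      rw [Nat.cast_sub (by omega)]; ring
    have hkernel := inv_rpow_mul_inv_rpow_le hs.le
      (Nat.cast_pos.2 (by omega : 0 < i)) (Nat.cast_pos.2 (by omega : 0 < k - i))
    rw [hsum] at hkernel
    calc |u i * v (k - i)| ≤ Cu / (i : ℝ) ^ s * (Cv / ((k - i : ℕ) : ℝ) ^ s) := by
          rw [abs_mul]
          exact mul_le_mul (hu i (by omega)) (hv _ (by omega)) (abs_nonneg _)
            (div_nonneg hCu (by positivity))
      _ = Cu * Cv * (((i : ℝ) ^ s)⁻¹ * (((k - i : ℕ) : ℝ) ^ s)⁻¹) := by ring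
      _ ≤ _ := by rw [mul_assoc _ (2 ^ (s - 1) / _)]; gcongr
  calc ∑ i ∈ Ico (n + 1) (k - n), |u i * v (k - i)|
      ≤ ∑ i ∈ Ico (n + 1) (k - n), Cu * Cv * (2 ^ (s - 1) / (k : ℝ) ^ s) *
          (((i : ℝ) ^ s)⁻¹ + (((k - i : ℕ) : ℝ) ^ s)⁻¹) := sum_le_sum hterm
    _ = Cu * Cv * (2 ^ (s - 1) / (k : ℝ) ^ s) *
          (2 * ∑ i ∈ Ico (n + 1) (k - n), ((i : ℝ) ^ s)⁻¹) := by
        rw [← mul_sum, sum_add_distrib, sum_Ico_inv_rpow_reflect s hk, two_mul]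
    _ ≤ Cu * Cv * (2 ^ (s - 1) / (k : ℝ) ^ s) * (2 * ((n : ℝ) ^ (1 - s) / (s - 1))) := by
        gcongr; exact sum_Ico_inv_rpow_le hs hn _
    _ = _ := by rw [Real.rpow_sub two_pos, Real.rpow_one]; ring

lemma sum_Ico_abs_mul_sub_reflect (hk : 2 * n < k) :
    ∑ i ∈ Ico (k - n) k, |u i * v (k - i)| = ∑ i ∈ Icc 1 n, |v i * u (k - i)| := by
  rw [← Ico_add_one_right_eq_Icc, show Ico (k - n) k = Ico (k + 1 - (n + 1)) (k + 1 - 1) by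
    congr 1; omega, ← sum_Ico_reflect _ _ (by omega)]
  refine sum_congr rfl fun i hi => ?_
  rw [Nat.sub_sub_self (by simp at hi; omega), mul_comm]

lemma abs_sum_Ico_mul_sub_le (hs : 1 < s) (hn : 0 < n)
    (hu : ∀ i : ℕ, n < i → |u i| ≤ Cu / (i : ℝ) ^ s)
    (hv : ∀ i : ℕ, n < i → |v i| ≤ Cv / (i : ℝ) ^ s) (hk : 2 * n < k) :
    |∑ i ∈ Ico 1 k, u i * v (k - i)| ≤
      (∑ i ∈ Icc 1 n, (Cu * |v i| + Cv * |u i|) *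
          ((2 * (n : ℝ) + 1) / (2 * (n : ℝ) + 1 - (i : ℝ))) ^ s +
        Cu * Cv * 2 ^ s * ((n : ℝ) ^ (1 - s) / (s - 1))) / (k : ℝ) ^ s := by
  have hleft := sum_Icc_abs_mul_sub_le (u := u) (by linarith) hv hk
  have hright := sum_Icc_abs_mul_sub_le (u := v) (by linarith) hu hk
  rw [← sum_Ico_abs_mul_sub_reflect hk] at hright
  have hmid := sum_Ico_abs_mul_sub_le hs hn hu hv hk
  calc |∑ i ∈ Ico 1 k, u i * v (k - i)| ≤ ∑ i ∈ Ico 1 k, |u i * v (k - i)| :=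
        abs_sum_le_sum_abs _ _
    _ = ∑ i ∈ Icc 1 n, |u i * v (k - i)| + ∑ i ∈ Ico (n + 1) (k - n), |u i * v (k - i)| +
          ∑ i ∈ Ico (k - n) k, |u i * v (k - i)| := by
        rw [← Ico_add_one_right_eq_Icc, sum_Ico_consecutive _ (by omega) (by omega),
          sum_Ico_consecutive _ (by omega) (by omega)]
    _ ≤ _ := add_le_add (add_le_add hleft hmid) hright
    _ = _ := by simp only [add_mul, sum_add_distrib]; ring

end Convolution

theorem product_coefficient_tail_bound_general (s Cu Cv : ℝ) (hs : 1 < s)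
    (n : ℕ) (hn : 0 < n) (u v : ℕ → ℝ)
    (hu : ∀ i : ℕ, n < i → |u i| ≤ Cu / (i : ℝ) ^ s)
    (hv : ∀ i : ℕ, n < i → |v i| ≤ Cv / (i : ℝ) ^ s)
    (k : ℕ) (hk : 2 * n < k) :
    |(1 / 2) * (∑' i : ℕ, u (i + 1 + k) * v (i + 1)) +
     (1 / 2) * (∑' i : ℕ, u (i + 1) * v (i + 1 + k)) -
     (1 / 2) * ∑ i ∈ Finset.Ico 1 k, u i * v (k - i)| ≤
    ((1 / 2) * (∑ i ∈ Finset.Icc 1 n,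
        (Cu * |v i| + Cv * |u i|) *
          (1 + ((2 * (n : ℝ) + 1) / (2 * (n : ℝ) + 1 - (i : ℝ))) ^ s) +
      Cu * Cv * (2 + 2 ^ s) * (n : ℝ) ^ (1 - s) / (s - 1))) / (k : ℝ) ^ s := by
  have hA := abs_tsum_shift_mul_le hs hn hu hv (by omega : n < k)
  have hB := abs_tsum_shift_mul_le hs hn hv hu (by omega : n < k)
  simp only [mul_comm (v _)] at hB
  have hC := abs_sum_Ico_mul_sub_le hs hn hu hv hk
  set A := ∑' i : ℕ, u (i + 1 + k) * v (i + 1)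
  set B := ∑' i : ℕ, u (i + 1) * v (i + 1 + k)
  set C := ∑ i ∈ Ico 1 k, u i * v (k - i)
  calc |1 / 2 * A + 1 / 2 * B - 1 / 2 * C| = 1 / 2 * |A + B - C| := by
        rw [← mul_add, ← mul_sub, abs_mul, abs_of_pos one_half_pos]
    _ ≤ 1 / 2 * (|A| + |B| + |C|) := by
        gcongr; exact (abs_sub _ _).trans (add_le_add_left (abs_add_le _ _) _)
    _ ≤ _ := by
        refine (mul_le_mul_of_nonneg_left (add_le_add (add_le_add hA hB) hC)
          (by norm_num)).trans_eq ?_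
        simp only [mul_add, mul_one, sum_add_distrib, ← mul_sum]
        ring

/-- Tail estimate for the cosine Fourier coefficients of the product of two sine
series with polynomial decay of rate `s`. -/
theorem product_coefficient_tail_bound (s Cu Cv : ℝ) (hs : 1 < s)
    (hCu : 0 < Cu) (hCv : 0 < Cv) (n : ℕ) (hn : 0 < n) (u v : ℕ → ℝ)
    (hu : ∀ i : ℕ, n < i → |u i| ≤ Cu / (i : ℝ) ^ s)
    (hv : ∀ i : ℕ, n < i → |v i| ≤ Cv / (i : ℝ) ^ s)
    (k : ℕ) (hk : 2 * n < k) :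
    |(1 / 2) * (∑' i : ℕ, u (i + 1 + k) * v (i + 1)) +
     (1 / 2) * (∑' i : ℕ, u (i + 1) * v (i + 1 + k)) -
     (1 / 2) * ∑ i ∈ Finset.Ico 1 k, u i * v (k - i)| ≤
    ((1 / 2) * (∑ i ∈ Finset.Icc 1 n,
        (Cu * |v i| + Cv * |u i|) *
          (1 + ((2 * (n : ℝ) + 1) / (2 * (n : ℝ) + 1 - (i : ℝ))) ^ s) +
      Cu * Cv * (2 + 2 ^ s) * (n : ℝ) ^ (1 - s) / (s - 1))) / (k : ℝ) ^ s :=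
  product_coefficient_tail_bound_general s Cu Cv hs n hn u v hu hv k hk
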